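/- Writing f(k) for the limit of a_k(n)/n as n → ∞ (which exists for every k ≥ 2), f(k)/k converges to 1/4 as k → ∞. Precisely: for every ε > 0 there exists K such that for every integer k ≥ K and every real L, if a_k(n)/n converges to L as n → ∞, then |L/k - 1/4| ≤ ε. -/

import Mathlib

/-!
A point of `S` lies in at most one pattern per direction, so `k * P_k(S) ≤ 4 * |S|`, which gives
`f(k) ≥ k / 4`.

For the other bound put `m = k + 1` and remove from a large square the holes
`x ≡ F (y mod m) (mod m)`. If the `m` queens `(F s, s)` on the `m × m` torus attacked each other
neither along rows and columns nor along diagonals, every maximal segment of the square would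
have length exactly `k`, so almost every point would lie in four patterns. Non-attacking
toroidal queens exist only when `gcd(m, 6) = 1` (take `F s = 2 s`). For other `m`, adding a
bounded shift to `2 s` on each sixth of `[0, m)` leaves at most `140` residues whose queen can
be attacked, and that is enough for `f(k) ≤ (k + 1)² / (4 (k - 139))`.
-/

open Finset Filter

/-- The four directions: horizontal, vertical and the two diagonals. -/
def Dirs : Finset (ℤ × ℤ) := {(1, 0), (0, 1), (1, 1), (1, -1)}

/-- `p` is the start of a pattern of length `k` of `S` in direction `d`:
`p + t • d ∈ S` for all `0 ≤ t < k`, while `p - d ∉ S` and `p + k • d ∉ S`. -/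
def IsPatternStart (S : Finset (ℤ × ℤ)) (k : ℕ) (d p : ℤ × ℤ) : Prop :=
  (∀ t : ℕ, t < k → p + (t : ℤ) • d ∈ S) ∧ p - d ∉ S ∧ p + (k : ℤ) • d ∉ S

/-- `P_k(S)`: the number of pairs `(d, p)` with `d ∈ Dirs` and `p` the start of a
pattern of length `k` of `S` in direction `d`. -/
noncomputable def patternCount (S : Finset (ℤ × ℤ)) (k : ℕ) : ℕ :=
  Set.ncard {dp : (ℤ × ℤ) × (ℤ × ℤ) | dp.1 ∈ Dirs ∧ IsPatternStart S k dp.1 dp.2}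

/-- `a_k(n)`: the minimum cardinality of a finite `S ⊆ ℤ × ℤ` with exactly `n`
patterns of length `k`. -/
noncomputable def minPoints (k n : ℕ) : ℕ :=
  sInf {c | ∃ S : Finset (ℤ × ℤ), patternCount S k = n ∧ S.card = c}

theorem ne_zero_of_mem_dirs {d : ℤ × ℤ} (hd : d ∈ Dirs) : d ≠ 0 := by
  simp only [Dirs, mem_insert, mem_singleton] at hd
  rcases hd with rfl | rfl | rfl | rfl <;> decide

theorem IsPatternStart.eq_of_add_smul_eq {S : Finset (ℤ × ℤ)} {k : ℕ} {d p p' : ℤ × ℤ}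
    {t t' : ℕ} (h : IsPatternStart S k d p) (h' : IsPatternStart S k d p') (ht : t < k)
    (ht' : t' < k) (he : p + (t : ℤ) • d = p' + (t' : ℤ) • d) : p = p' := by
  wlog htt : t ≤ t' generalizing p p' t t'
  · exact (this h' h ht' ht he.symm (by omega)).symm
  obtain ⟨r, rfl⟩ := Nat.exists_eq_add_of_le htt
  rcases r.eq_zero_or_pos with rfl | hr
  · simpa using he
  refine absurd ?_ h'.2.2
  have hp : p = p' + (r : ℤ) • d := by
    rw [← add_right_cancel_iff (a := (t : ℤ) • d), he]; push_cast; rw [add_smul]; abel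
  convert h.1 (k - r) (by omega) using 1
  rw [hp, add_assoc, ← add_smul, Nat.cast_sub (by omega)]; abel_nf

def patternStarts (S : Finset (ℤ × ℤ)) (k : ℕ) : Set ((ℤ × ℤ) × (ℤ × ℤ)) :=
  {dp | dp.1 ∈ Dirs ∧ IsPatternStart S k dp.1 dp.2}

theorem patternStarts_subset {S : Finset (ℤ × ℤ)} {k : ℕ} (hk : 0 < k) :
    patternStarts S k ⊆ ↑(Dirs ×ˢ S) := fun dp hdp => by
  simpa using And.intro hdp.1 (hdp.2.1 0 hk)

theorem mul_patternCount_le (S : Finset (ℤ × ℤ)) (k : ℕ) :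
    k * patternCount S k ≤ 4 * #S := by
  calc k * patternCount S k = (patternStarts S k ×ˢ (range k : Set ℕ)).ncard := by
        rw [Set.ncard_prod, Set.ncard_coe_finset, card_range, patternCount, patternStarts,
          mul_comm]
    _ ≤ (↑(Dirs ×ˢ S) : Set ((ℤ × ℤ) × (ℤ × ℤ))).ncard := by
        refine Set.ncard_le_ncard_of_injOn (fun x => (x.1.1, x.1.2 + (x.2 : ℤ) • x.1.1)) ?_ ?_
          (finite_toSet _)
        · rintro ⟨⟨d, p⟩, t⟩ ⟨⟨hd, hp⟩, ht⟩
          simpa using And.intro hd (hp.1 t (by simpa using ht))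
        · rintro ⟨⟨d, p⟩, t⟩ ⟨⟨hd, hp⟩, ht⟩ ⟨⟨d', p'⟩, t'⟩ ⟨⟨-, hp'⟩, ht'⟩ he
          obtain ⟨rfl, he⟩ := Prod.mk.inj he
          simp only [coe_range, Set.mem_Iio] at ht ht'
          obtain rfl := hp.eq_of_add_smul_eq hp' ht ht' he
          have := smul_left_injective ℤ (ne_zero_of_mem_dirs hd) (add_left_cancel he)
          simp_all
    _ = 4 * #S := by rw [Set.ncard_coe_finset, card_product]; rfl

theorem minPoints_le_card (S : Finset (ℤ × ℤ)) (k : ℕ) :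
    minPoints k (patternCount S k) ≤ #S :=
  Nat.sInf_le ⟨S, rfl, rfl⟩

theorem mul_le_four_mul_minPoints (S : Finset (ℤ × ℤ)) (k : ℕ) :
    k * patternCount S k ≤ 4 * minPoints k (patternCount S k) := by
  obtain ⟨S₀, hS₀, hcard⟩ := Nat.sInf_mem (s := {c | ∃ S₀ : Finset (ℤ × ℤ),
    patternCount S₀ k = patternCount S k ∧ #S₀ = c}) ⟨#S, S, rfl, rfl⟩
  rw [minPoints, ← hcard, ← hS₀]
  exact mul_patternCount_le S₀ k

/-- `s` lies in one of the six intervals `[i m / 6, (i + 1) m / 6)`, at distance at least `10`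
from its ends. -/
def IsInteriorResidue (m s : ℤ) : Prop :=
  ∃ i : ℤ, 0 ≤ i ∧ i < 6 ∧ i * m + 60 ≤ 6 * s ∧ 6 * s + 60 ≤ (i + 1) * m

theorem IsInteriorResidue.bounds {m s : ℤ} (h : IsInteriorResidue m s) :
    10 ≤ s ∧ s + 10 ≤ m := by
  obtain ⟨i, hi₀, hi₆, hs⟩ := h
  interval_cases i <;> omega

open Classical in
noncomputable def interiorResidues (m : ℤ) : Finset ℤ := (Ico 0 m).filter (IsInteriorResidue m)

theorem le_card_interiorResidues_add {m : ℤ} (hm : 0 < m) :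
    m ≤ #(interiorResidues m) + 140 := by
  classical
  have hsplit := card_filter_add_card_filter_not (s := Ico 0 m) (IsInteriorResidue m)
  have hbad : #((Ico 0 m).filter (¬ IsInteriorResidue m ·)) ≤ 140 := by
    calc _ ≤ #((Icc (0 : ℤ) 6).biUnion fun j => Icc (j * m / 6 - 9) (j * m / 6 + 10)) := by
          refine card_le_card fun s hs => ?_
          simp only [mem_filter, mem_Ico] at hs
          obtain ⟨⟨hs₀, hsm⟩, hs⟩ := hs
          have h₁ : 6 * s / m * m ≤ 6 * s := Int.ediv_mul_le _ hm.ne'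
          have h₂ : 6 * s < (6 * s / m + 1) * m := Int.lt_ediv_add_one_mul_self _ hm
          have hi₀ : 0 ≤ 6 * s / m := Int.ediv_nonneg (by omega) hm.le
          have hi₆ : 6 * s / m < 6 := Int.ediv_lt_of_lt_mul hm (by omega)
          simp only [mem_biUnion, mem_Icc]
          by_cases hlo : 6 * s / m * m + 60 ≤ 6 * s
          · have hhi : (6 * s / m + 1) * m < 6 * s + 60 := by
              by_contra! hhi
              exact hs ⟨_, hi₀, hi₆, hlo, hhi⟩
            rw [add_mul, one_mul] at h₂ hhi
            exact ⟨6 * s / m + 1, by omega, by rw [add_mul, one_mul]; omega⟩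
          · exact ⟨6 * s / m, by omega, by omega⟩
      _ ≤ ∑ j ∈ Icc (0 : ℤ) 6, #(Icc (j * m / 6 - 9) (j * m / 6 + 10)) := card_biUnion_le
      _ = 140 := by
          simp [Int.card_Icc, show ∀ a : ℤ, (a + 10 + 1 - (a - 9)).toNat = 20 by omega]
  simp only [interiorResidues, Int.card_Ico, sub_zero] at hsplit ⊢
  omega

/-- For `gcd(m, 6) = 1` the queens `(2 s, s)` are non-attacking on the `m × m` torus, since
`s ↦ s, 2 s, 3 s` are bijections of `ℤ / m`. Otherwise shifting `2 s` by a constant on each sixth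
(half, third) of `[0, m)` leaves only queens near the breakpoints attacked. -/
def queenShift (m s : ℤ) : ℤ :=
  if m % 6 = 0 then
    if 6 * s < m then 0 else if 6 * s < 2 * m then 3 else if 6 * s < 3 * m then 4
    else if 6 * s < 4 * m then 1 else if 6 * s < 5 * m then 2 else 5
  else if m % 2 = 0 then (if 2 * s < m then 0 else 3)
  else if m % 3 = 0 then (if 3 * s < m then 0 else if 3 * s < 2 * m then -2 else 2)
  else 0

def queenCol (m s : ℤ) : ℤ := 2 * s + queenShift m s

section queenShift

variable {m : ℤ} (s : ℤ)

theorem queenShift_of_six_dvd (h : m % 6 = 0) :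
    6 * s < m ∧ queenShift m s = 0 ∨ m ≤ 6 * s ∧ 6 * s < 2 * m ∧ queenShift m s = 3 ∨
      2 * m ≤ 6 * s ∧ 6 * s < 3 * m ∧ queenShift m s = 4 ∨
      3 * m ≤ 6 * s ∧ 6 * s < 4 * m ∧ queenShift m s = 1 ∨
      4 * m ≤ 6 * s ∧ 6 * s < 5 * m ∧ queenShift m s = 2 ∨
      5 * m ≤ 6 * s ∧ queenShift m s = 5 := by
  rw [queenShift, if_pos h]; split_ifs <;> omega

theorem queenShift_of_two_dvd (h2 : m % 2 = 0) (h6 : m % 6 ≠ 0) :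
    2 * s < m ∧ queenShift m s = 0 ∨ m ≤ 2 * s ∧ queenShift m s = 3 := by
  rw [queenShift, if_neg h6, if_pos h2]; split_ifs <;> omega

theorem queenShift_of_three_dvd (h2 : m % 2 = 1) (h3 : m % 3 = 0) :
    3 * s < m ∧ queenShift m s = 0 ∨ m ≤ 3 * s ∧ 3 * s < 2 * m ∧ queenShift m s = -2 ∨
      2 * m ≤ 3 * s ∧ queenShift m s = 2 := by
  rw [queenShift, if_neg (by omega), if_neg (by omega), if_pos h3]; split_ifs <;> omega

theorem queenShift_of_coprime (h2 : m % 2 = 1) (h3 : m % 3 ≠ 0) : queenShift m s = 0 := by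
  rw [queenShift, if_neg (by omega), if_neg (by omega), if_neg h3]

theorem queenShift_mem_Icc : -2 ≤ queenShift m s ∧ queenShift m s ≤ 5 := by
  unfold queenShift; split_ifs <;> omega

end queenShift

theorem eq_mul_of_dvd_of_abs_lt {m D : ℤ} (h : m ∣ D) (hD : |D| < 4 * m) :
    D = m * -3 ∨ D = m * -2 ∨ D = m * -1 ∨ D = m * 0 ∨ D = m * 1 ∨ D = m * 2 ∨
      D = m * 3 := by
  obtain ⟨j, rfl⟩ := h
  have hm : 0 < m := by linarith [abs_nonneg (m * j)]
  rw [abs_mul, abs_of_pos hm] at hD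
  have hj : |j| < 4 := lt_of_mul_lt_mul_left (a := m) (by linarith) hm.le
  obtain ⟨hj₁, hj₂⟩ := abs_lt.mp hj
  interval_cases j <;> simp

set_option maxHeartbeats 1000000 in
theorem queenCol_inj {m s s' μ : ℤ} (hm : 200 ≤ m) (hμ : |μ| ≤ 1)
    (hs : IsInteriorResidue m s) (hs'₀ : 0 ≤ s') (hs' : s' < m)
    (h : m ∣ (queenCol m s' + μ * s') - (queenCol m s + μ * s)) : s' = s := by
  obtain ⟨i, hi₀, hi₆, hsi⟩ := hs
  obtain ⟨hμ₁, hμ₂⟩ := abs_le.mp hμ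
  have hc := queenShift_mem_Icc (m := m) s
  have hc' := queenShift_mem_Icc (m := m) s'
  unfold queenCol at h
  -- On each piece `queenCol m s + μ * s` is affine in `s` with slope `2 + μ`; once the pieces of
  -- `s`, `s'` and the quotient by `m` of the difference are fixed, only linear arithmetic is left.
  interval_cases μ <;> interval_cases i <;>
  · have hD := eq_mul_of_dvd_of_abs_lt h (by rw [abs_lt]; constructor <;> omega)
    clear h hc hc' hμ
    rcases (by omega : m % 6 = 0 ∨ m % 2 = 0 ∧ m % 6 ≠ 0 ∨ m % 2 = 1 ∧ m % 3 = 0 ∨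
      m % 2 = 1 ∧ m % 3 ≠ 0) with h | ⟨h2, h6⟩ | ⟨h2, h3⟩ | ⟨h2, h3⟩
    · have hc' := queenShift_of_six_dvd s' h
      rcases queenShift_of_six_dvd s h with hc | hc | hc | hc | hc | hc <;> omega
    · have hc' := queenShift_of_two_dvd s' h2 h6
      rcases queenShift_of_two_dvd s h2 h6 with hc | hc <;> omega
    · have hc' := queenShift_of_three_dvd s' h2 h3
      rcases queenShift_of_three_dvd s h2 h3 with hc | hc | hc <;> omega
    · rw [queenShift_of_coprime s h2 h3, queenShift_of_coprime s' h2 h3] at hD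
      omega

/-- The queen `(F s, s)` of an interior row attacks no other queen `(F s', s')` of the
`m × m` torus: `(F s', s') ≡ (F s, s) + t • d (mod m)` forces `s' = s`. -/
def IsAlmostToroidalQueens (m : ℤ) (F : ℤ → ℤ) : Prop :=
  ∀ d ∈ Dirs, ∀ s s' t : ℤ, IsInteriorResidue m s → 0 ≤ s' → s' < m →
    m ∣ F s' - F s - t * d.1 → m ∣ s' - s - t * d.2 → s' = s

theorem isAlmostToroidalQueens_queenCol {m : ℤ} (hm : 200 ≤ m) :
    IsAlmostToroidalQueens m (queenCol m) := by
  intro d hd s s' t hs hs'₀ hs' h₁ h₂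
  obtain ⟨hs₀, hsm⟩ := hs.bounds
  simp only [Dirs, mem_insert, mem_singleton] at hd
  rcases hd with rfl | rfl | rfl | rfl <;>
    simp only [mul_zero, mul_one, sub_zero, mul_neg, sub_neg_eq_add] at h₁ h₂
  · have := Int.eq_zero_of_abs_lt_dvd h₂ (by rw [abs_lt]; omega)
    omega
  · exact queenCol_inj (μ := 0) hm (by simp) hs hs'₀ hs' (by simpa using h₁)
  · exact queenCol_inj (μ := -1) hm (by simp) hs hs'₀ hs'
      (by convert Int.dvd_sub h₁ h₂ using 1; ring)
  · exact queenCol_inj (μ := 1) hm (by simp) hs hs'₀ hs'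
      (by convert Int.dvd_add h₁ h₂ using 1; ring)

def IsQueenHole (m : ℤ) (F : ℤ → ℤ) (p : ℤ × ℤ) : Prop := m ∣ p.1 - F (p.2 % m)

instance (m : ℤ) (F : ℤ → ℤ) : DecidablePred (IsQueenHole m F) :=
  fun p => inferInstanceAs (Decidable (m ∣ p.1 - F (p.2 % m)))

noncomputable def queenHoleBox (m : ℤ) (F : ℤ → ℤ) (N : ℤ) : Finset (ℤ × ℤ) :=
  (Ico 0 N ×ˢ Ico 0 N).filter fun p => ¬ IsQueenHole m F p

theorem add_mul_inj_of_mem_Ico {m s s' v v' : ℤ} (hs : s ∈ Ico 0 m) (hs' : s' ∈ Ico 0 m)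
    (h : s + m * v = s' + m * v') : s = s' ∧ v = v' := by
  rw [mem_Ico] at hs hs'
  have hm : 0 < m := by omega
  obtain ⟨hv, hs⟩ := (Int.ediv_emod_unique hm).2 ⟨rfl, hs⟩
  obtain ⟨hv', hs'⟩ := (Int.ediv_emod_unique hm).2 ⟨rfl, hs'⟩
  rw [h] at hv hs
  exact ⟨hs.symm.trans hs', hv.symm.trans hv'⟩

section queenHoleBox

variable {m : ℤ} {F : ℤ → ℤ}

theorem isQueenHole_add_smul_iff (hF : IsAlmostToroidalQueens m F) {d : ℤ × ℤ}
    (hd : d ∈ Dirs) {s : ℤ} (hs : IsInteriorResidue m s) (u v t : ℤ) :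
    IsQueenHole m F ((F s % m + m * u, s + m * v) + t • d) ↔ m ∣ t := by
  obtain ⟨hs₀, hsm⟩ := hs.bounds
  have hm : 0 < m := by omega
  have hFs : m ∣ F s - F s % m := Int.dvd_self_sub_emod
  simp only [IsQueenHole, Prod.fst_add, Prod.snd_add, Prod.smul_fst, Prod.smul_snd, smul_eq_mul]
  constructor
  · intro h
    have hy : m ∣ s + m * v + t * d.2 - (s + m * v + t * d.2) % m := Int.dvd_self_sub_emod
    have hrow : (s + m * v + t * d.2) % m = s :=
      hF d hd s _ t hs (Int.emod_nonneg _ hm.ne') (Int.emod_lt_of_pos _ hm)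
        (by convert Int.dvd_sub (Int.dvd_mul_right m u) (Int.dvd_add hFs h) using 1; ring)
        (by convert Int.dvd_sub (Int.dvd_mul_right m v) hy using 1; ring)
    rw [hrow] at h hy
    have h₁ : m ∣ t * d.1 := by
      convert Int.dvd_sub (Int.dvd_add hFs h) (Int.dvd_mul_right m u) using 1; ring
    have h₂ : m ∣ t * d.2 := by convert Int.dvd_sub hy (Int.dvd_mul_right m v) using 1; ring
    simp only [Dirs, mem_insert, mem_singleton] at hd
    rcases hd with rfl | rfl | rfl | rfl <;> simp_all
  · rintro ⟨w, rfl⟩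
    have hrow : (s + m * v + m * w * d.2) % m = s := by
      rw [show s + m * v + m * w * d.2 = s + m * (v + w * d.2) by ring, Int.add_mul_emod_self_left,
        Int.emod_eq_of_lt (by omega) (by omega)]
    rw [hrow]
    convert Int.dvd_sub (Int.dvd_mul_right m (u + w * d.1)) hFs using 1; ring

theorem isPatternStart_queenHoleBox (hF : IsAlmostToroidalQueens m F) {k : ℕ}
    (hk : (k : ℤ) + 1 = m) {d : ℤ × ℤ} (hd : d ∈ Dirs) {s : ℤ}
    (hs : IsInteriorResidue m s) {T u v : ℤ} (hu : u ∈ Icc 1 T) (hv : v ∈ Icc 1 T) :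
    IsPatternStart (queenHoleBox m F (m * (T + 2))) k d ((F s % m + m * u, s + m * v) + d) := by
  set q : ℤ × ℤ := (F s % m + m * u, s + m * v)
  obtain ⟨hs₀, hsm⟩ := hs.bounds
  have hm : 0 < m := by omega
  have hmem : ∀ t : ℤ, 0 ≤ t → t ≤ m →
      (q + t • d ∈ queenHoleBox m F (m * (T + 2)) ↔ ¬ m ∣ t) := by
    intro t ht₀ ht
    rw [queenHoleBox, mem_filter, isQueenHole_add_smul_iff hF hd hs, and_iff_right_iff_imp]
    intro _
    rw [mem_Icc] at hu hv
    have := Int.emod_nonneg (F s) hm.ne'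
    have := Int.emod_lt_of_pos (F s) hm
    have := mul_le_mul_of_nonneg_left hu.1 hm.le
    have := mul_le_mul_of_nonneg_left hu.2 hm.le
    have := mul_le_mul_of_nonneg_left hv.1 hm.le
    have := mul_le_mul_of_nonneg_left hv.2 hm.le
    simp only [Dirs, mem_insert, mem_singleton] at hd
    simp only [q, mem_product, mem_Ico, Prod.fst_add, Prod.snd_add, Prod.smul_fst, Prod.smul_snd,
      smul_eq_mul, mul_add]
    rcases hd with rfl | rfl | rfl | rfl <;> simp only [mul_one, mul_zero, mul_neg] <;> omega
  refine ⟨fun t ht => ?_, ?_, ?_⟩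
  · rw [show q + d + (t : ℤ) • d = q + ((t : ℤ) + 1) • d by rw [add_smul, one_smul]; abel,
      hmem _ (by omega) (by omega)]
    exact fun h => absurd (Int.le_of_dvd (by omega) h) (by omega)
  · simpa using (hmem 0 le_rfl hm.le).not
  · rw [show q + d + (k : ℤ) • d = q + m • d by rw [← hk, add_smul, one_smul]; abel,
      hmem _ (by omega) le_rfl]
    simp

theorem four_mul_card_mul_sq_le_patternCount (hF : IsAlmostToroidalQueens m F) {k : ℕ}
    (hk₀ : 0 < k) (hk : (k : ℤ) + 1 = m) (T : ℕ) :
    4 * #(interiorResidues m) * T ^ 2 ≤ patternCount (queenHoleBox m F (m * (T + 2))) k := by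
  calc 4 * #(interiorResidues m) * T ^ 2
      = #(Dirs ×ˢ interiorResidues m ×ˢ Icc (1 : ℤ) T ×ˢ Icc (1 : ℤ) T) := by
        simp only [card_product, Int.card_Icc, add_sub_cancel_right, Int.toNat_natCast]
        rw [show #Dirs = 4 from rfl]; ring
    _ ≤ patternCount (queenHoleBox m F (m * (T + 2))) k := by
        rw [← Set.ncard_coe_finset]
        refine Set.ncard_le_ncard_of_injOn
          (fun x => (x.1, (F x.2.1 % m + m * x.2.2.1, x.2.1 + m * x.2.2.2) + x.1)) ?_ ?_
          ((Dirs ×ˢ _).finite_toSet.subset (patternStarts_subset hk₀))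
        · rintro ⟨d, s, u, v⟩ hx
          simp only [coe_product, Set.mem_prod, mem_coe, interiorResidues, mem_filter] at hx
          exact ⟨hx.1, isPatternStart_queenHoleBox hF hk hx.1 hx.2.1.2 hx.2.2.1 hx.2.2.2⟩
        · rintro ⟨d, s, u, v⟩ hx ⟨d', s', u', v'⟩ hx' he
          simp only [coe_product, Set.mem_prod, mem_coe, interiorResidues, mem_filter] at hx hx'
          obtain ⟨rfl, he⟩ := Prod.mk.inj he
          obtain ⟨hu, hv⟩ := Prod.mk.inj (add_right_cancel he)
          dsimp only at hu hv
          obtain ⟨rfl, rfl⟩ := add_mul_inj_of_mem_Ico hx.2.1.1 hx'.2.1.1 hv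
          have hm : m ≠ 0 := by have := mem_Ico.1 hx.2.1.1; omega
          rw [mul_left_cancel₀ hm (add_left_cancel hu)]

end queenHoleBox

theorem exists_card_le_and_le_patternCount {k : ℕ} (hk : 199 ≤ k) (T : ℕ) :
    ∃ S : Finset (ℤ × ℤ),
      #S ≤ ((k + 1) * (T + 2)) ^ 2 ∧ 4 * (k - 139) * T ^ 2 ≤ patternCount S k := by
  set m : ℤ := k + 1
  refine ⟨queenHoleBox m (queenCol m) (m * (T + 2)), ?_, ?_⟩
  · calc _ ≤ #(Ico 0 (m * (T + 2)) ×ˢ Ico 0 (m * (T + 2))) := card_filter_le _ _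
      _ = ((k + 1) * (T + 2)) ^ 2 := by
        rw [card_product, Int.card_Ico, sub_zero, sq,
          show m * (T + 2) = (((k + 1) * (T + 2) : ℕ) : ℤ) by push_cast; rfl, Int.toNat_natCast]
  · calc 4 * (k - 139) * T ^ 2 ≤ 4 * #(interiorResidues m) * T ^ 2 := by
          have := le_card_interiorResidues_add (m := m) (by omega)
          gcongr
          omega
      _ ≤ _ := four_mul_card_mul_sq_le_patternCount (isAlmostToroidalQueens_queenCol (by omega))
          (by omega) rfl T

theorem bounds_of_tendsto_minPoints_div {k : ℕ} (hk : 199 ≤ k) {L : ℝ}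
    (hL : Tendsto (fun n : ℕ => (minPoints k n : ℝ) / n) atTop (nhds L)) :
    (k : ℝ) / 4 ≤ L ∧ L ≤ ((k : ℝ) + 1) ^ 2 / (4 * ((k : ℝ) - 139)) := by
  choose S hcard hcount using exists_card_le_and_le_patternCount hk
  set n : ℕ → ℕ := fun T => patternCount (S T) k
  have hn : ∀ T, T ≤ n T := fun T =>
    calc T ≤ T ^ 2 := Nat.le_self_pow two_ne_zero T
      _ ≤ 4 * (k - 139) * T ^ 2 := Nat.le_mul_of_pos_left _ (by omega)
      _ ≤ n T := hcount T
  have hlim := hL.comp (tendsto_atTop_mono hn tendsto_id)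
  have hpos : ∀ T, 1 ≤ T → (0 : ℝ) < n T := fun T hT => by exact_mod_cast hT.trans (hn T)
  have hk' : (0 : ℝ) < (k : ℝ) - 139 := by
    rw [sub_pos]; exact_mod_cast (by omega : 139 < k)
  constructor
  · refine ge_of_tendsto hlim (eventually_atTop.2 ⟨1, fun T hT => ?_⟩)
    rw [Function.comp_apply, le_div_iff₀ (hpos T hT), div_mul_eq_mul_div, div_le_iff₀ four_pos]
    exact_mod_cast mul_comm (minPoints k (n T)) 4 ▸ mul_le_four_mul_minPoints (S T) k
  · set R : ℝ := ((k : ℝ) + 1) ^ 2 / (4 * ((k : ℝ) - 139))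
    have hg : Tendsto (fun T : ℕ => R * (1 + 2 / (T : ℝ)) ^ 2) atTop (nhds R) := by
      simpa using
        (((tendsto_const_div_atTop_nhds_zero_nat (2 : ℝ)).const_add 1).pow 2).const_mul R
    refine le_of_tendsto_of_tendsto hlim hg (eventually_atTop.2 ⟨1, fun T hT => ?_⟩)
    have hT : (0 : ℝ) < T := by exact_mod_cast hT
    have hnum : (minPoints k (n T) : ℝ) ≤ (((k : ℝ) + 1) * ((T : ℝ) + 2)) ^ 2 := by
      exact_mod_cast (minPoints_le_card (S T) k).trans (hcard T)
    have hden : 4 * ((k : ℝ) - 139) * (T : ℝ) ^ 2 ≤ n T := by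
      have := hcount T
      rw [← Nat.cast_le (α := ℝ)] at this
      push_cast [Nat.cast_sub (by omega : 139 ≤ k)] at this
      exact this
    calc (minPoints k (n T) : ℝ) / n T
        ≤ (((k : ℝ) + 1) * ((T : ℝ) + 2)) ^ 2 / (4 * ((k : ℝ) - 139) * (T : ℝ) ^ 2) :=
          div_le_div₀ (by positivity) hnum (by positivity) hden
      _ = R * (1 + 2 / (T : ℝ)) ^ 2 := by
          simp only [R]; field_simp

theorem abs_div_sub_quarter_le {k L ε : ℝ} (hk : 280 ≤ k) (hkε : 71 ≤ ε * k)
    (hlo : k / 4 ≤ L) (hhi : L ≤ (k + 1) ^ 2 / (4 * (k - 139))) : |L / k - 1 / 4| ≤ ε := by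
  have hk₀ : 0 < k := by linarith
  have hε : 0 < ε := pos_of_mul_pos_left (by linarith) hk₀.le
  rw [abs_le]
  constructor
  · rw [le_sub_iff_add_le, le_div_iff₀ hk₀]; linarith
  · calc L / k - 1 / 4 ≤ (k + 1) ^ 2 / (4 * (k - 139)) / k - 1 / 4 := by gcongr
      _ ≤ ε := by
          rw [div_div, sub_le_iff_le_add, div_le_iff₀ (by nlinarith)]
          nlinarith [mul_le_mul_of_nonneg_right hkε (by linarith : (0 : ℝ) ≤ k - 139)]

theorem stmt16 :
    ∀ ε : ℝ, 0 < ε → ∃ K : ℕ, ∀ k : ℕ, K ≤ k → ∀ L : ℝ,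
      Tendsto (fun n : ℕ => (minPoints k n : ℝ) / n) atTop (nhds L) →
      |L / k - 1 / 4| ≤ ε := by
  intro ε hε
  refine ⟨280 + ⌈71 / ε⌉₊, fun k hK L hL => ?_⟩
  obtain ⟨hlo, hhi⟩ := bounds_of_tendsto_minPoints_div (by omega) hL
  have hK' : (280 : ℝ) + ⌈71 / ε⌉₊ ≤ k := by exact_mod_cast hK
  have hk : 71 / ε ≤ k := by linarith [Nat.le_ceil (71 / ε), Nat.cast_nonneg (α := ℝ) 280]
  rw [div_le_iff₀ hε] at hk
  exact abs_div_sub_quarter_le (by linarith [(Nat.ceil (71 / ε)).cast_nonneg (α := ℝ)])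
    (by linarith) hlo hhi
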